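/- For every $z \in \mathbb{C}^4$, $\|z\|_{\mathsf{X}} \ge \sum_{j=1}^4 |z_j| - 2\min_j |z_j|$. -/

import Mathlib

open Complex Real

noncomputable def Xfun (z : Fin 4 → ℂ) (σ : ℝ) : ℝ :=
  ‖z 0 * Complex.exp (σ * Complex.I) + (starRingEnd ℂ) (z 3)‖ +
  ‖z 1 * Complex.exp (σ * Complex.I) + (starRingEnd ℂ) (z 2)‖

noncomputable def Xnorm (z : Fin 4 → ℂ) : ℝ := ⨆ σ : ℝ, Xfun z σ

noncomputable def phase (z : Fin 4 → ℂ) : ℝ :=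
  (Complex.arg (z 0) + Complex.arg (z 3)) - (Complex.arg (z 1) + Complex.arg (z 2))

/-!
Choosing `σ` to align `z₀ e^{iσ}` with `conj z₃` makes the first term `|z₀| + |z₃|`, while the
reverse triangle inequality bounds the second below by `||z₁| - |z₂||`; symmetrically for the other
pair. Hence `‖z‖_X ≥ ∑ |zᵢ| - 2|zⱼ|` for every index `j`, in particular for one of least modulus.
-/

open ComplexConjugate

section
variable (a b : ℂ)

lemma norm_mul_exp_add_conj_le (σ : ℝ) : ‖a * exp (σ * I) + conj b‖ ≤ ‖a‖ + ‖b‖ := by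
  simpa [norm_exp_ofReal_mul_I] using norm_add_le (a * exp (σ * I)) (conj b)

lemma abs_norm_sub_norm_le_norm_mul_exp_add_conj (σ : ℝ) :
    |‖a‖ - ‖b‖| ≤ ‖a * exp (σ * I) + conj b‖ := by
  simpa [norm_exp_ofReal_mul_I] using abs_norm_sub_norm_le (a * exp (σ * I)) (-conj b)

lemma conj_eq_norm_mul_exp_neg_arg : conj b = ‖b‖ * exp (-b.arg * I) := by
  conv_lhs => rw [← norm_mul_exp_arg_mul_I b]
  rw [map_mul, conj_ofReal, ← exp_conj, map_mul, conj_ofReal, conj_I]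
  ring_nf

/-- Rotating `a` by `-(arg a + arg b)` puts it on the ray of `conj b`. -/
lemma exists_norm_mul_exp_add_conj_eq : ∃ σ : ℝ, ‖a * exp (σ * I) + conj b‖ = ‖a‖ + ‖b‖ := by
  refine ⟨-(a.arg + b.arg), ?_⟩
  have same_ray : a * exp ((-(a.arg + b.arg) : ℝ) * I) + conj b
      = ((‖a‖ + ‖b‖ : ℝ) : ℂ) * exp ((-b.arg : ℝ) * I) := by
    nth_rw 1 [← norm_mul_exp_arg_mul_I a]
    rw [conj_eq_norm_mul_exp_neg_arg, mul_assoc, ← Complex.exp_add]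
    push_cast
    ring_nf
  rw [same_ray, norm_mul, norm_exp_ofReal_mul_I, mul_one, norm_real,
    norm_of_nonneg (by positivity)]

end

lemma bddAbove_range_Xfun (z : Fin 4 → ℂ) : BddAbove (Set.range (Xfun z)) := by
  refine ⟨‖z 0‖ + ‖z 3‖ + (‖z 1‖ + ‖z 2‖), ?_⟩
  rintro _ ⟨σ, rfl⟩
  exact add_le_add (norm_mul_exp_add_conj_le _ _ σ) (norm_mul_exp_add_conj_le _ _ σ)

lemma Xfun_le_Xnorm (z : Fin 4 → ℂ) (σ : ℝ) : Xfun z σ ≤ Xnorm z :=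
  le_ciSup (bddAbove_range_Xfun z) σ

lemma norm_add_norm_add_abs_sub_le_Xnorm (z : Fin 4 → ℂ) :
    ‖z 0‖ + ‖z 3‖ + |‖z 1‖ - ‖z 2‖| ≤ Xnorm z := by
  obtain ⟨σ, hσ⟩ := exists_norm_mul_exp_add_conj_eq (z 0) (z 3)
  calc ‖z 0‖ + ‖z 3‖ + |‖z 1‖ - ‖z 2‖| ≤ Xfun z σ := by
        rw [Xfun, hσ]
        exact add_le_add_right (abs_norm_sub_norm_le_norm_mul_exp_add_conj _ _ σ) _
    _ ≤ Xnorm z := Xfun_le_Xnorm z σ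

lemma abs_sub_add_norm_add_norm_le_Xnorm (z : Fin 4 → ℂ) :
    |‖z 0‖ - ‖z 3‖| + (‖z 1‖ + ‖z 2‖) ≤ Xnorm z := by
  obtain ⟨σ, hσ⟩ := exists_norm_mul_exp_add_conj_eq (z 1) (z 2)
  calc |‖z 0‖ - ‖z 3‖| + (‖z 1‖ + ‖z 2‖) ≤ Xfun z σ := by
        rw [Xfun, hσ]
        exact add_le_add_left (abs_norm_sub_norm_le_norm_mul_exp_add_conj _ _ σ) _
    _ ≤ Xnorm z := Xfun_le_Xnorm z σ

lemma sum_norm_sub_two_mul_norm_le_Xnorm (z : Fin 4 → ℂ) (j : Fin 4) :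
    ∑ i, ‖z i‖ - 2 * ‖z j‖ ≤ Xnorm z := by
  have h03 := norm_add_norm_add_abs_sub_le_Xnorm z
  have h12 := abs_sub_add_norm_add_norm_le_Xnorm z
  rw [Fin.sum_univ_four]
  fin_cases j <;> simp only [Fin.zero_eta, Fin.mk_one, Fin.reduceFinMk, Fin.isValue] <;>
    linarith [le_abs_self (‖z 0‖ - ‖z 3‖), neg_abs_le (‖z 0‖ - ‖z 3‖),
      le_abs_self (‖z 1‖ - ‖z 2‖), neg_abs_le (‖z 1‖ - ‖z 2‖)]

theorem stmt_19 (z : Fin 4 → ℂ) :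
    (∑ i : Fin 4, ‖z i‖) -
        2 * (Finset.univ.inf' Finset.univ_nonempty fun j => ‖z j‖) ≤
      Xnorm z := by
  obtain ⟨j, -, hj⟩ := Finset.exists_mem_eq_inf' Finset.univ_nonempty fun j => ‖z j‖
  rw [hj]
  exact sum_norm_sub_two_mul_norm_le_Xnorm z j
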